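/- arXiv:1909.11558 — 6 statements merged into one kernel-verified Lean document; each statement's English description precedes it below -/
import Mathlib

section
/- Let H, M : [0,1] → ℝ satisfy assumptions (HM1)–(HM3), and fix an integer n ≥ 2. A pair (a,b) ∈ [0,1]² is called canonical if H'(a) = M'(b) and 2a + (n-1)b = 1. Then a canonical pair exists if and only if H'(1/2) ≤ M'(0), and if it exists, it is unique. -/
/-!
Since `H'' < 0` and `M'' < 0`, both `H'` and `M'` are strictly decreasing on `[0,1]`. On the line
`2a + (n-1)b = 1` the coordinate `a` decreases as `b` grows, so `b ↦ H'(a) - M'(b)` is strictly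
increasing, which gives uniqueness. At `b = 0` it equals `H'(1/2) - M'(0)`; at `b = 1/(n-1)` it is
`H'(0) - M'(1/(n-1)) ≥ H'(0) - M'(0) ≥ 0`, the last step because `H - M ≥ 0` vanishes at `0`.
The intermediate value theorem then gives existence, and monotonicity the converse.
-/

open Set

theorem deriv_le_deriv_of_le_of_eq {f g : ℝ → ℝ} {a b : ℝ} (hab : a < b)
    (hf : DifferentiableAt ℝ f a) (hg : DifferentiableAt ℝ g a)
    (hfg : ∀ x ∈ Icc a b, f x ≤ g x) (ha : f a = g a) : deriv f a ≤ deriv g a := by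
  have hmin : IsLocalMinOn (g - f) (Icc a b) a :=
    IsMinOn.localize fun x hx => by simpa [ha] using hfg x hx
  have hcone : b - a ∈ posTangentConeAt (Icc a b) a :=
    sub_mem_posTangentConeAt_of_segment_subset
      ((convex_Icc a b).segment_subset (left_mem_Icc.2 hab.le) (right_mem_Icc.2 hab.le))
  have key := hmin.hasFDerivWithinAt_nonneg
    (hg.hasDerivAt.sub hf.hasDerivAt).hasDerivWithinAt.hasFDerivWithinAt hcone
  simp only [ContinuousLinearMap.toSpanSingleton_apply, smul_eq_mul] at key
  nlinarith

theorem strictAntiOn_Icc_of_deriv_neg {g : ℝ → ℝ} {a b : ℝ}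
    (hg : ∀ x ∈ Icc a b, DifferentiableAt ℝ g x) (hneg : ∀ x ∈ Ioo a b, deriv g x < 0) :
    StrictAntiOn g (Icc a b) :=
  strictAntiOn_of_deriv_neg (convex_Icc a b)
    (fun x hx => (hg x hx).continuousAt.continuousWithinAt) (by rwa [interior_Icc])

-- The paper's canonical pairs are those of `IsCanonicalPair (deriv H) (deriv M) (n - 1)`.
def IsCanonicalPair (h m : ℝ → ℝ) (K a b : ℝ) : Prop :=
  a ∈ Icc (0 : ℝ) 1 ∧ b ∈ Icc (0 : ℝ) 1 ∧ h a = m b ∧ 2 * a + K * b = 1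

namespace IsCanonicalPair

variable {h m : ℝ → ℝ} {K a b a' b' : ℝ}

theorem apply_half_le_apply_zero (hK : 0 ≤ K) (hh : AntitoneOn h (Icc 0 1))
    (hm : AntitoneOn m (Icc 0 1)) (p : IsCanonicalPair h m K a b) : h (1 / 2) ≤ m 0 := by
  obtain ⟨ha, hb, he, hs⟩ := p
  calc h (1 / 2) ≤ h a := hh ha (by norm_num) (by nlinarith [hb.1])
    _ = m b := he
    _ ≤ m 0 := hm (by norm_num) hb hb.1

theorem snd_le (hK : 0 ≤ K) (hh : AntitoneOn h (Icc 0 1)) (hm : StrictAntiOn m (Icc 0 1))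
    (p : IsCanonicalPair h m K a b) (q : IsCanonicalPair h m K a' b') : b ≤ b' := by
  obtain ⟨ha, hb, he, hs⟩ := p
  obtain ⟨ha', hb', he', hs'⟩ := q
  by_contra! hlt
  have h1 : m b < m b' := hm hb' hb hlt
  have h2 : h a' ≤ h a := hh ha ha' (by nlinarith)
  linarith

theorem unique (hK : 0 ≤ K) (hh : AntitoneOn h (Icc 0 1)) (hm : StrictAntiOn m (Icc 0 1))
    (p : IsCanonicalPair h m K a b) (q : IsCanonicalPair h m K a' b') : a = a' ∧ b = b' := by
  obtain rfl : b = b' := le_antisymm (p.snd_le hK hh hm q) (q.snd_le hK hh hm p)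
  exact ⟨by linarith [p.2.2.2, q.2.2.2], rfl⟩

end IsCanonicalPair

theorem exists_isCanonicalPair {h m : ℝ → ℝ} {K : ℝ} (hK : 1 ≤ K)
    (hhc : ContinuousOn h (Icc 0 1)) (hmc : ContinuousOn m (Icc 0 1))
    (hm : AntitoneOn m (Icc 0 1)) (h0 : m 0 ≤ h 0) (hhalf : h (1 / 2) ≤ m 0) :
    ∃ a b, IsCanonicalPair h m K a b := by
  have hK0 : 0 < K := by linarith
  have hKinv : K⁻¹ ∈ Icc (0 : ℝ) 1 := ⟨inv_nonneg.2 hK0.le, inv_le_one_of_one_le₀ hK⟩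
  have hsub : Icc 0 K⁻¹ ⊆ Icc (0 : ℝ) 1 := Icc_subset_Icc le_rfl hKinv.2
  have hfst : ∀ b ∈ Icc 0 K⁻¹, (1 - K * b) / 2 ∈ Icc (0 : ℝ) 1 := by
    intro b hb
    have : K * b ≤ 1 := by
      calc K * b ≤ K * K⁻¹ := mul_le_mul_of_nonneg_left hb.2 hK0.le
        _ = 1 := mul_inv_cancel₀ hK0.ne'
    constructor <;> nlinarith [hb.1]
  set f : ℝ → ℝ := fun b => h ((1 - K * b) / 2) - m b
  have hfc : ContinuousOn f (Icc 0 K⁻¹) :=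
    (hhc.comp (by fun_prop) hfst).sub (hmc.mono hsub)
  have hf0 : f 0 ≤ 0 := by simpa [f] using hhalf
  have hfK : 0 ≤ f K⁻¹ := by
    simp only [f, mul_inv_cancel₀ hK0.ne', sub_self, zero_div]
    linarith [hm (left_mem_Icc.2 zero_le_one) hKinv hKinv.1]
  obtain ⟨b, hb, hfb⟩ := intermediate_value_Icc hKinv.1 hfc ⟨hf0, hfK⟩
  exact ⟨_, b, hfst b hb, hsub hb, sub_eq_zero.1 hfb, by ring⟩

theorem stmt5_general (H M : ℝ → ℝ) (n : ℕ) (hn : 2 ≤ n)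
    (hHd : ∀ x ∈ Set.Icc (0:ℝ) 1, DifferentiableAt ℝ H x)
    (hHd2 : ∀ x ∈ Set.Icc (0:ℝ) 1, DifferentiableAt ℝ (deriv H) x)
    (hMd : ∀ x ∈ Set.Icc (0:ℝ) 1, DifferentiableAt ℝ M x)
    (hMd2 : ∀ x ∈ Set.Icc (0:ℝ) 1, DifferentiableAt ℝ (deriv M) x)
    (hH'' : ∀ x ∈ Set.Ico (0:ℝ) 1, deriv (deriv H) x < 0)
    (hM'' : ∀ x ∈ Set.Ico (0:ℝ) 1, deriv (deriv M) x < 0)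
    (hH0 : H 0 = 0) (hM0 : M 0 = 0)
    (hHM : ∀ x ∈ Set.Icc (0:ℝ) 1, M x ≤ H x) :
    ((∃ a b : ℝ, a ∈ Set.Icc (0:ℝ) 1 ∧ b ∈ Set.Icc (0:ℝ) 1 ∧
        deriv H a = deriv M b ∧ 2 * a + (n - 1 : ℝ) * b = 1) ↔
      deriv H (1/2) ≤ deriv M 0) ∧
    (∀ a b a' b' : ℝ,
      a ∈ Set.Icc (0:ℝ) 1 → b ∈ Set.Icc (0:ℝ) 1 →
      a' ∈ Set.Icc (0:ℝ) 1 → b' ∈ Set.Icc (0:ℝ) 1 →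
      deriv H a = deriv M b → 2 * a + (n - 1 : ℝ) * b = 1 →
      deriv H a' = deriv M b' → 2 * a' + (n - 1 : ℝ) * b' = 1 →
      a = a' ∧ b = b') := by
  have hK : (1 : ℝ) ≤ n - 1 := by
    have : (2 : ℝ) ≤ n := by exact_mod_cast hn
    linarith
  have hK0 : (0 : ℝ) ≤ n - 1 := zero_le_one.trans hK
  have hHanti : StrictAntiOn (deriv H) (Icc 0 1) :=
    strictAntiOn_Icc_of_deriv_neg hHd2 fun x hx => hH'' x (Ioo_subset_Ico_self hx)
  have hManti : StrictAntiOn (deriv M) (Icc 0 1) :=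
    strictAntiOn_Icc_of_deriv_neg hMd2 fun x hx => hM'' x (Ioo_subset_Ico_self hx)
  have hHc : ContinuousOn (deriv H) (Icc 0 1) := fun x hx =>
    (hHd2 x hx).continuousAt.continuousWithinAt
  have hMc : ContinuousOn (deriv M) (Icc 0 1) := fun x hx =>
    (hMd2 x hx).continuousAt.continuousWithinAt
  have h0 : deriv M 0 ≤ deriv H 0 :=
    deriv_le_deriv_of_le_of_eq zero_lt_one (hMd 0 (left_mem_Icc.2 zero_le_one))
      (hHd 0 (left_mem_Icc.2 zero_le_one)) hHM (hM0.trans hH0.symm)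
  refine ⟨⟨fun ⟨a, b, p⟩ => ?_, exists_isCanonicalPair hK hHc hMc hManti.antitoneOn h0⟩, ?_⟩
  · exact IsCanonicalPair.apply_half_le_apply_zero hK0 hHanti.antitoneOn hManti.antitoneOn p
  · intro a b a' b' ha hb ha' hb' he hs he' hs'
    exact IsCanonicalPair.unique hK0 hHanti.antitoneOn hManti ⟨ha, hb, he, hs⟩ ⟨ha', hb', he', hs'⟩

/-- Under (HM1)-(HM3) and n ≥ 2, a canonical pair
(H'(a) = M'(b) and 2a + (n-1)b = 1, with a, b ∈ [0,1]) exists iff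
H'(1/2) ≤ M'(0), and is unique when it exists. -/
theorem stmt5 (H M : ℝ → ℝ) (n : ℕ) (hn : 2 ≤ n)
    (hHd : ∀ x ∈ Set.Icc (0:ℝ) 1, DifferentiableAt ℝ H x)
    (hHd2 : ∀ x ∈ Set.Icc (0:ℝ) 1, DifferentiableAt ℝ (deriv H) x)
    (hMd : ∀ x ∈ Set.Icc (0:ℝ) 1, DifferentiableAt ℝ M x)
    (hMd2 : ∀ x ∈ Set.Icc (0:ℝ) 1, DifferentiableAt ℝ (deriv M) x)
    (hH' : ∀ x ∈ Set.Ico (0:ℝ) 1, 0 < deriv H x)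
    (hM' : ∀ x ∈ Set.Ico (0:ℝ) 1, 0 < deriv M x)
    (hH'' : ∀ x ∈ Set.Ico (0:ℝ) 1, deriv (deriv H) x < 0)
    (hM'' : ∀ x ∈ Set.Ico (0:ℝ) 1, deriv (deriv M) x < 0)
    (hH0 : H 0 = 0) (hM0 : M 0 = 0)
    (hHM : ∀ x ∈ Set.Icc (0:ℝ) 1, M x ≤ H x) :
    ((∃ a b : ℝ, a ∈ Set.Icc (0:ℝ) 1 ∧ b ∈ Set.Icc (0:ℝ) 1 ∧
        deriv H a = deriv M b ∧ 2 * a + (n - 1 : ℝ) * b = 1) ↔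
      deriv H (1/2) ≤ deriv M 0) ∧
    (∀ a b a' b' : ℝ,
      a ∈ Set.Icc (0:ℝ) 1 → b ∈ Set.Icc (0:ℝ) 1 →
      a' ∈ Set.Icc (0:ℝ) 1 → b' ∈ Set.Icc (0:ℝ) 1 →
      deriv H a = deriv M b → 2 * a + (n - 1 : ℝ) * b = 1 →
      deriv H a' = deriv M b' → 2 * a' + (n - 1 : ℝ) * b' = 1 →
      a = a' ∧ b = b') :=
  stmt5_general H M n hn hHd hHd2 hMd hMd2 hH'' hM'' hH0 hM0 hHM
end

section
/- Let F be the CDF of a distribution with density f, with F continuous, and define θ_x(y) = ∫₀^y (1 - F(t)) dt + ∫₀^{(x-y)/2} (1 - F(t)) dt for 0 ≤ y ≤ x ≤ 1. Then the derivative of θ_x at y = x/3 satisfies θ_x'(x/3) = (1/2)(1 - F(x/3)) ≥ 0; consequently, if θ_x is concave in y, its maximizer ρ(x) on [0,x] satisfies ρ(x) ≥ x/3. -/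
open intervalIntegral

open Filter Set Topology in
lemma concave_deriv_slope {θ : ℝ → ℝ} {s : Set ℝ} (hconc : ConcaveOn ℝ s θ)
    {a b d : ℝ} (ha : a ∈ s) (hb : b ∈ s) (hab : a < b) (hd : HasDerivAt θ d b) :
    d * (b - a) ≤ θ b - θ a := by
  have htend : Tendsto (slope θ b) (𝓝[<] b) (𝓝 d) :=
    (hasDerivAt_iff_tendsto_slope.mp hd).mono_left
      (nhdsWithin_mono _ (fun z hz => ne_of_lt hz))
  have hev : ∀ᶠ z in 𝓝[<] b, slope θ b z ≤ slope θ b a := by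
    filter_upwards [Ioo_mem_nhdsLT_of_mem (Set.mem_Ioc.mpr ⟨hab, le_refl b⟩)] with z hz
    have hzs : z ∈ s := hconc.1.ordConnected.out ha hb ⟨le_of_lt hz.1, le_of_lt hz.2⟩
    have := hconc.neg.secant_mono hb ha hzs (ne_of_lt hab) (ne_of_lt hz.2) (le_of_lt hz.1)
    simp only [slope_def_field, Pi.neg_apply] at this ⊢
    have h1 : (-θ a - -θ b) / (a - b) ≤ (-θ z - -θ b) / (z - b) := this
    have h2 : (θ z - θ b) / (z - b) = -((-θ z - -θ b) / (z - b)) := by ring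
    have h3 : (θ a - θ b) / (a - b) = -((-θ a - -θ b) / (a - b)) := by ring
    rw [h2, h3]
    linarith
  have hle : d ≤ slope θ b a := le_of_tendsto htend hev
  rw [slope_def_field] at hle
  have hba : (0:ℝ) < b - a := by linarith
  have : d ≤ (θ b - θ a) / (b - a) := by
    have : (θ a - θ b) / (a - b) = (θ b - θ a) / (b - a) := by
      rw [div_eq_div_iff] <;> [ring; linarith; linarith]
    linarith [hle, this]
  calc d * (b - a) ≤ (θ b - θ a) / (b - a) * (b - a) := by nlinarith
    _ = θ b - θ a := by field_simp

/-- In the symmetric game, with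
θ_x(y) = ∫₀^y (1-F) + ∫₀^{(x-y)/2} (1-F), the derivative of θ_x at y = x/3 equals
(1/2)(1 - F(x/3)) ≥ 0; hence if θ_x is concave its unique maximizer ρ(x) on [0,x]
satisfies ρ(x) ≥ x/3. -/
theorem stmt7 (f F : ℝ → ℝ)
    (hf : Continuous f) (hfpos : ∀ t, 0 ≤ f t)
    (hF : ∀ y, HasDerivAt F (f y) y)
    (hFle : ∀ t, F t ≤ 1)
    (x : ℝ) (hx : x ∈ Set.Icc (0:ℝ) 1) :
    HasDerivAt
      (fun y => (∫ t in (0:ℝ)..y, (1 - F t)) + ∫ t in (0:ℝ)..((x - y)/2), (1 - F t))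
      ((1/2) * (1 - F (x/3))) (x/3) ∧
    (0:ℝ) ≤ (1/2) * (1 - F (x/3)) ∧
    (∀ ρx ∈ Set.Icc (0:ℝ) x,
      ConcaveOn ℝ (Set.Icc 0 x)
        (fun y => (∫ t in (0:ℝ)..y, (1 - F t)) + ∫ t in (0:ℝ)..((x - y)/2), (1 - F t)) →
      IsMaxOn (fun y => (∫ t in (0:ℝ)..y, (1 - F t)) + ∫ t in (0:ℝ)..((x - y)/2), (1 - F t))
        (Set.Icc 0 x) ρx →
      (∀ t ∈ Set.Icc (0:ℝ) x,
        IsMaxOn (fun y => (∫ t in (0:ℝ)..y, (1 - F t)) + ∫ t in (0:ℝ)..((x - y)/2), (1 - F t))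
          (Set.Icc 0 x) t → t = ρx) →
      x/3 ≤ ρx) := by
  have hFc : Continuous F := continuous_iff_continuousAt.mpr fun y => (hF y).continuousAt
  have hcont : Continuous (fun t => 1 - F t) := continuous_const.sub hFc
  have hg : ∀ y : ℝ, HasDerivAt (fun y => ∫ t in (0:ℝ)..y, (1 - F t)) (1 - F y) y := fun y =>
    intervalIntegral.integral_hasDerivAt_right (hcont.intervalIntegrable _ _)
      (hcont.stronglyMeasurableAtFilter _ _) hcont.continuousAt
  have hinner : ∀ y : ℝ, HasDerivAt (fun y => (x - y)/2) ((0-1)/2) y := fun y =>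
    ((hasDerivAt_const y x).sub (hasDerivAt_id y)).div_const 2
  have hcomp : ∀ y : ℝ, HasDerivAt (fun y => ∫ t in (0:ℝ)..((x - y)/2), (1 - F t))
      ((1 - F ((x - y)/2)) * ((0-1)/2)) y := fun y =>
    by have := (hg ((x - y)/2)).comp y (hinner y); exact this
  have hd : HasDerivAt
      (fun y => (∫ t in (0:ℝ)..y, (1 - F t)) + ∫ t in (0:ℝ)..((x - y)/2), (1 - F t))
      ((1/2) * (1 - F (x/3))) (x/3) := by
    have h := (hg (x/3)).add (hcomp (x/3))
    have heq : (1 - F (x/3)) + (1 - F ((x - x/3)/2)) * ((0-1)/2) = (1/2) * (1 - F (x/3)) := by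
      rw [show (x - x/3)/2 = x/3 from by ring]; ring
    rwa [heq] at h
  have hnn : (0:ℝ) ≤ (1/2) * (1 - F (x/3)) := by
    have := hFle (x/3); linarith
  refine ⟨hd, hnn, ?_⟩
  intro ρx hρ hconc hmax huniq
  by_contra hcon
  push_neg at hcon
  have hb3 : x/3 ∈ Set.Icc (0:ℝ) x := ⟨by linarith [hx.1], by linarith [hx.1]⟩
  have hslope := concave_deriv_slope hconc hρ hb3 hcon hd
  set θ := (fun y => (∫ t in (0:ℝ)..y, (1 - F t)) + ∫ t in (0:ℝ)..((x - y)/2), (1 - F t))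
  have h1 : θ (x/3) ≤ θ ρx := hmax hb3
  have h2 : θ ρx ≤ θ (x/3) := by nlinarith
  have hmax3 : IsMaxOn θ (Set.Icc 0 x) (x/3) := fun t ht => le_trans (hmax ht) h2
  have := huniq (x/3) hb3 hmax3
  linarith
end

section
/- For α ≥ 1, the inequality 2^{1/α} · (2 + 2^{1/α})^α ≥ 8 holds, with equality exactly at α = 1. Moreover, the function α ↦ 2^{1/α}(2 + 2^{1/α})^α is monotonically increasing for α > 1. -/
open Real Set

/-- The log of the Hotelling function. -/
noncomputable def stmt11G (α : ℝ) : ℝ :=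
  Real.log 2 / α + α * Real.log (2 + Real.exp (Real.log 2 / α))

lemma stmt11_two_rpow_eq (α : ℝ) : (2:ℝ) ^ (1/α) = Real.exp (Real.log 2 / α) := by
  rw [Real.rpow_def_of_pos (by norm_num), mul_one_div]

lemma stmt11_f_eq_exp_G (α : ℝ) :
    (2:ℝ) ^ (1/α) * ((2 + (2:ℝ) ^ (1/α)) ^ α) = Real.exp (stmt11G α) := by
  have hpos : (0:ℝ) < 2 + (2:ℝ) ^ (1/α) := by positivity
  rw [Real.rpow_def_of_pos hpos, stmt11_two_rpow_eq, stmt11G, Real.exp_add,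
    mul_comm (Real.log _) α]

lemma stmt11_G_hasDeriv (α : ℝ) (hα : 0 < α) :
    HasDerivAt stmt11G
      (Real.log 2 * -(α^2)⁻¹ +
        (1 * Real.log (2 + Real.exp (Real.log 2 / α)) +
          α * (Real.exp (Real.log 2 / α) * (Real.log 2 * -(α^2)⁻¹) /
            (2 + Real.exp (Real.log 2 / α))))) α := by
  have h1 : HasDerivAt (fun x : ℝ => Real.log 2 / x) (Real.log 2 * -(α^2)⁻¹) α := by
    simpa [div_eq_mul_inv] using (hasDerivAt_inv hα.ne').const_mul (Real.log 2)
  have h2 : HasDerivAt (fun x : ℝ => Real.exp (Real.log 2 / x))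
      (Real.exp (Real.log 2 / α) * (Real.log 2 * -(α^2)⁻¹)) α := h1.exp
  have h3 : HasDerivAt (fun x : ℝ => 2 + Real.exp (Real.log 2 / x))
      (Real.exp (Real.log 2 / α) * (Real.log 2 * -(α^2)⁻¹)) α := h2.const_add 2
  have hne : (2 + Real.exp (Real.log 2 / α)) ≠ 0 := by positivity
  have h4 := h3.log hne
  exact h1.add ((hasDerivAt_id α).mul h4)

lemma stmt11_deriv_pos (α : ℝ) (hα : 1 ≤ α) :
    0 < Real.log 2 * -(α^2)⁻¹ +
        (1 * Real.log (2 + Real.exp (Real.log 2 / α)) +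
          α * (Real.exp (Real.log 2 / α) * (Real.log 2 * -(α^2)⁻¹) /
            (2 + Real.exp (Real.log 2 / α)))) := by
  have hα0 : (0:ℝ) < α := by linarith
  set E := Real.exp (Real.log 2 / α) with hE
  have hL2 : (0:ℝ) ≤ Real.log 2 := Real.log_nonneg (by norm_num)
  have hE1 : (1:ℝ) ≤ E := Real.one_le_exp (div_nonneg hL2 hα0.le)
  have hE2 : E ≤ 2 := by
    calc E ≤ Real.exp (Real.log 2) :=
          Real.exp_le_exp.2 (div_le_self hL2 hα)
      _ = 2 := Real.exp_log (by norm_num)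
  have h89 : 3 * Real.log 2 < 2 * Real.log 3 := by
    have := Real.log_lt_log (by norm_num : (0:ℝ) < 8) (by norm_num : (8:ℝ) < 9)
    rw [show (8:ℝ) = 2^(3:ℕ) by norm_num, show (9:ℝ) = 3^(2:ℕ) by norm_num,
      Real.log_pow, Real.log_pow] at this
    push_cast at this; linarith
  have hlog3 : Real.log 3 ≤ Real.log (2 + E) :=
    Real.log_le_log (by norm_num) (by linarith)
  have hα2 : (1:ℝ) ≤ α^2 := by nlinarith
  have h2 : Real.log 2 * (α^2)⁻¹ ≤ Real.log 2 := by
    have : (α^2)⁻¹ ≤ 1 := by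
      rw [inv_le_one_iff₀]; right; exact hα2
    nlinarith
  have hden : (0:ℝ) < 2 + E := by linarith
  have h3 : α * (E * (Real.log 2 * (α^2)⁻¹) / (2 + E)) ≤ Real.log 2 / 2 := by
    have hinv : α * (α^2)⁻¹ = α⁻¹ := by
      field_simp [sq]
    have hinv1 : α⁻¹ ≤ 1 := by
      rw [inv_le_one_iff₀]; right; exact hα
    have hinv0 : (0:ℝ) ≤ α⁻¹ := by positivity
    rw [mul_div_assoc', div_le_div_iff₀ (by positivity) (by norm_num)]
    have : α * (E * (Real.log 2 * (α^2)⁻¹)) = E * Real.log 2 * α⁻¹ := by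
      rw [← hinv]; ring
    rw [this]
    have hEL : (0:ℝ) ≤ E * Real.log 2 := mul_nonneg (by linarith) hL2
    have ha : E * Real.log 2 * α⁻¹ ≤ E * Real.log 2 :=
      mul_le_of_le_one_right hEL hinv1
    have hb : E * Real.log 2 ≤ 2 * Real.log 2 := mul_le_mul_of_nonneg_right hE2 hL2
    nlinarith
  have key : Real.log 3 - Real.log 2 - Real.log 2 / 2 > 0 := by linarith
  have expand : Real.log 2 * -(α^2)⁻¹ +
        (1 * Real.log (2 + E) +
          α * (E * (Real.log 2 * -(α^2)⁻¹) / (2 + E)))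
      = Real.log (2 + E) - Real.log 2 * (α^2)⁻¹
        - α * (E * (Real.log 2 * (α^2)⁻¹) / (2 + E)) := by
    ring
  rw [expand]
  linarith

lemma stmt11_G_strictMono : StrictMonoOn stmt11G (Set.Ici 1) := by
  apply strictMonoOn_of_deriv_pos (convex_Ici 1)
  · intro x hx
    exact (stmt11_G_hasDeriv x (lt_of_lt_of_le one_pos hx)).continuousAt.continuousWithinAt
  · intro x hx
    rw [interior_Ici] at hx
    rw [(stmt11_G_hasDeriv x (by linarith [mem_Ioi.1 hx])).deriv]
    exact stmt11_deriv_pos x (le_of_lt (mem_Ioi.1 hx))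

lemma stmt11_f_strictMono :
    StrictMonoOn (fun α : ℝ => (2:ℝ) ^ (1/α) * ((2 + (2:ℝ) ^ (1/α)) ^ α))
      (Set.Ici 1) := by
  intro a ha b hb hab
  simp only [stmt11_f_eq_exp_G]
  exact Real.exp_lt_exp.2 (stmt11_G_strictMono ha hb hab)

lemma stmt11_f_one : (2:ℝ) ^ (1/(1:ℝ)) * ((2 + (2:ℝ) ^ (1/(1:ℝ))) ^ (1:ℝ)) = 8 := by
  norm_num

/-- For α ≥ 1, 2^{1/α}·(2 + 2^{1/α})^α ≥ 8, with equality exactly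
at α = 1; moreover the function is strictly increasing for α > 1. -/
theorem stmt11 :
    (∀ α : ℝ, 1 ≤ α → (8:ℝ) ≤ (2:ℝ) ^ (1/α) * ((2 + (2:ℝ) ^ (1/α)) ^ α)) ∧
    (∀ α : ℝ, 1 ≤ α →
      ((2:ℝ) ^ (1/α) * ((2 + (2:ℝ) ^ (1/α)) ^ α) = 8 ↔ α = 1)) ∧
    StrictMonoOn (fun α : ℝ => (2:ℝ) ^ (1/α) * ((2 + (2:ℝ) ^ (1/α)) ^ α))
      (Set.Ioi 1) := by
  have hlt : ∀ α : ℝ, 1 < α →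
      (8:ℝ) < (2:ℝ) ^ (1/α) * ((2 + (2:ℝ) ^ (1/α)) ^ α) := by
    intro α hα
    have := stmt11_f_strictMono (Set.self_mem_Ici) (Set.mem_Ici.2 hα.le) hα
    simpa only [stmt11_f_one] using this
  refine ⟨?_, ?_, ?_⟩
  · intro α hα
    rcases eq_or_lt_of_le hα with h | h
    · rw [← h]; rw [stmt11_f_one]
    · exact (hlt α h).le
  · intro α hα
    constructor
    · intro h
      by_contra hne
      have h1 : 1 < α := lt_of_le_of_ne hα (Ne.symm hne)
      exact absurd h (ne_of_gt (hlt α h1))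
    · intro h; rw [h]; exact stmt11_f_one
  · exact stmt11_f_strictMono.mono (Set.Ioi_subset_Ici le_rfl)
end

section
/- Let f be a continuously differentiable density on [0,1] with f > 0 and CDF F. Define M(x) = ∫₀^{x/2}(1-F(t))dt + ∫_{x/2}^x (1-F(t))F(x-t)dt. Then M is twice differentiable with M''(x) = -∫_{x/2}^x f(t)f(x-t)dt < 0 for x ∈ (0,1); in particular M is strictly concave. -/
/-!
Writing `M x = ∫₀^{x/2} (1 - F) + ∫₀^x G x - ∫₀^{x/2} G x` with `G x t = (1 - F t) F (x - t)`,
the Leibniz rule for integrals whose integrand and upper limit both depend on `x` (the chain rule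
applied to `(y, z) ↦ ∫ₐᶻ G y t dt`, whose partial derivatives are continuous) gives
`M' x = (1 - F (x/2))² / 2 + ∫₀^{x/2} f u (1 - F (x - u)) du`: the boundary term at `t = x`
vanishes because `F 0 = 0`, and `∫_{x/2}^x` becomes `∫₀^{x/2}` under `t = x - u`. Differentiating
once more, the two boundary terms cancel and `M'' x = -∫₀^{x/2} f u f (x - u) du`, the integral of a
positive function. Outside `[0, 1]` the density is replaced by a continuous positive extension,
which changes neither `F` nor `M` on `[0, 1]`.
-/

open intervalIntegral Set Filter Topology MeasureTheory

theorem hasDerivAt_integral_of_continuous_deriv {G G' : ℝ → ℝ → ℝ} (hG : Continuous ↿G)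
    (hG' : Continuous ↿G') (hGG' : ∀ y t, HasDerivAt (G · t) (G' y t) y) (a b x : ℝ) :
    HasDerivAt (fun y => ∫ t in a..b, G y t) (∫ t in a..b, G' x t) x := by
  obtain ⟨C, hC⟩ := ((isCompact_closedBall x 1).prod isCompact_uIcc).exists_bound_of_continuousOn
    hG'.continuousOn
  refine (intervalIntegral.hasDerivAt_integral_of_dominated_loc_of_deriv_le (bound := fun _ => C)
    (Metric.closedBall_mem_nhds x one_pos) ?_ ?_ ?_ ?_ ?_ ?_).2
  · exact .of_forall fun y => (hG.uncurry_left y).aestronglyMeasurable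
  · exact (hG.uncurry_left x).intervalIntegrable _ _
  · exact (hG'.uncurry_left x).aestronglyMeasurable
  · exact ae_of_all _ fun t ht y hy => hC (y, t) ⟨hy, uIoc_subset_uIcc ht⟩
  · exact intervalIntegrable_const
  · exact ae_of_all _ fun t _ y _ => hGG' y t

theorem hasDerivAt_integral_upper_of_continuous_deriv {G G' : ℝ → ℝ → ℝ} (hG : Continuous ↿G)
    (hG' : Continuous ↿G') (hGG' : ∀ y t, HasDerivAt (G · t) (G' y t) y) (a : ℝ) {φ : ℝ → ℝ}
    {φ' x : ℝ} (hφ : HasDerivAt φ φ' x) :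
    HasDerivAt (fun y => ∫ t in a..φ y, G y t) ((∫ t in a..φ x, G' x t) + G x (φ x) * φ') x := by
  have hspan : Continuous fun v : ℝ => ContinuousLinearMap.toSpanSingleton ℝ v :=
    (ContinuousLinearMap.toSpanSingletonCLE (𝕜 := ℝ) (E := ℝ)).continuous
  have hΨ := hasStrictFDerivAt_uncurry_coprod (u := (x, φ x))
    (f := fun y z => ∫ t in a..z, G y t)
    (f₁ := fun y z => ContinuousLinearMap.toSpanSingleton ℝ (∫ t in a..z, G' y t))
    (f₂ := fun y z => ContinuousLinearMap.toSpanSingleton ℝ (G y z))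
    (.of_forall fun v => hasDerivAt_iff_hasFDerivAt.1
      (hasDerivAt_integral_of_continuous_deriv hG hG' hGG' a v.2 v.1))
    (.of_forall fun v => hasDerivAt_iff_hasFDerivAt.1
      ((hG.uncurry_left v.1).integral_hasStrictDerivAt a v.2).hasDerivAt)
    (hspan.comp (continuous_parametric_primitive_of_continuous hG')).continuousAt
    (hspan.comp hG).continuousAt
  refine (hΨ.hasFDerivAt.comp_hasDerivAt x ((hasDerivAt_id x).prodMk hφ)).congr_deriv ?_
  simp [Function.HasUncurry.uncurry, mul_comm]

theorem ContinuousOn.exists_continuous_pos_extension_Icc {a b : ℝ} (hab : a ≤ b) {f : ℝ → ℝ}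
    (hf : ContinuousOn f (Icc a b)) (hpos : ∀ x ∈ Icc a b, 0 < f x) :
    ∃ g : ℝ → ℝ, Continuous g ∧ EqOn g f (Icc a b) ∧ ∀ y, 0 < g y :=
  ⟨IccExtend hab ((Icc a b).domRestrict f),
    (continuousOn_iff_continuous_domRestrict.1 hf).Icc_extend',
    fun _ hy => IccExtend_of_mem _ _ hy, fun y => hpos _ (projIcc a b hab y).2⟩

theorem integral_upper_half_eq_comp_sub (g : ℝ → ℝ) (x : ℝ) :
    ∫ t in x/2..x, g t = ∫ u in 0..x/2, g (x - u) := by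
  rw [integral_comp_sub_left, sub_zero, show x - x/2 = x/2 by ring]

theorem integral_upper_half_mul_comp_sub (f : ℝ → ℝ) (x : ℝ) :
    ∫ t in x/2..x, f t * f (x - t) = ∫ u in 0..x/2, f u * f (x - u) := by
  simp only [integral_upper_half_eq_comp_sub (fun t => f t * f (x - t)), sub_sub_cancel, mul_comm]

noncomputable def expectedSupport (F : ℝ → ℝ) (x : ℝ) : ℝ :=
  (∫ t in (0:ℝ)..(x/2), (1 - F t)) + ∫ t in (x/2)..x, (1 - F t) * F (x - t)

noncomputable def expectedSupportDeriv (f F : ℝ → ℝ) (x : ℝ) : ℝ :=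
  (1 - F (x/2)) ^ 2 / 2 + ∫ u in (0:ℝ)..(x/2), f u * (1 - F (x - u))

theorem expectedSupport_congr {F G : ℝ → ℝ} {x : ℝ} (hx : 0 ≤ x) (h : EqOn F G (Icc 0 x)) :
    expectedSupport F x = expectedSupport G x := by
  unfold expectedSupport
  congr 1 <;> refine integral_congr fun t ht => ?_
  · rw [uIcc_of_le (by linarith)] at ht
    rw [h ⟨ht.1, by linarith [ht.2]⟩]
  · rw [uIcc_of_le (by linarith)] at ht
    rw [h ⟨by linarith [ht.1], ht.2⟩, h ⟨by linarith [ht.2], by linarith [ht.1]⟩]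

theorem expectedSupport_primitive_congr {f g : ℝ → ℝ} {x : ℝ} (hx : 0 ≤ x)
    (h : EqOn f g (Icc 0 x)) :
    expectedSupport (fun y => ∫ t in (0:ℝ)..y, f t) x
      = expectedSupport (fun y => ∫ t in (0:ℝ)..y, g t) x :=
  expectedSupport_congr hx fun y hy =>
    integral_congr (h.mono (by rw [uIcc_of_le hy.1]; exact Icc_subset_Icc_right hy.2))

theorem integral_mul_comp_sub_congr {f g : ℝ → ℝ} {x : ℝ} (hx : 0 ≤ x) (h : EqOn f g (Icc 0 x)) :
    ∫ u in (0:ℝ)..(x/2), f u * f (x - u) = ∫ u in (0:ℝ)..(x/2), g u * g (x - u) := by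
  refine integral_congr fun u hu => ?_
  rw [uIcc_of_le (by linarith)] at hu
  rw [h ⟨hu.1, by linarith [hu.2]⟩, h ⟨by linarith [hu.2], by linarith [hu.1]⟩]

theorem integral_mul_comp_sub_pos {g : ℝ → ℝ} (hg : Continuous g) (hpos : ∀ y, 0 < g y) {x : ℝ}
    (hx : 0 < x) : 0 < ∫ u in (0:ℝ)..(x/2), g u * g (x - u) := by
  have hcont : Continuous fun u => g u * g (x - u) := by fun_prop
  exact intervalIntegral_pos_of_pos_on (hcont.intervalIntegrable _ _)
    (fun u _ => mul_pos (hpos u) (hpos _)) (by linarith)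

section
variable {f F : ℝ → ℝ} (hf : Continuous f) (hF : ∀ y, HasDerivAt F (f y) y)
include hf hF

theorem hasDerivAt_expectedSupport (hF0 : F 0 = 0) (x : ℝ) :
    HasDerivAt (expectedSupport F) (expectedSupportDeriv f F x) x := by
  have hFc : Continuous F := continuous_iff_continuousAt.2 fun y => (hF y).continuousAt
  set G : ℝ → ℝ → ℝ := fun y t => (1 - F t) * F (y - t)
  set G' : ℝ → ℝ → ℝ := fun y t => (1 - F t) * f (y - t)
  have hGG' : ∀ y t, HasDerivAt (G · t) (G' y t) y := fun y t => by
    simpa using ((hF (y - t)).comp y ((hasDerivAt_id y).sub_const t)).const_mul (1 - F t)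
  have hG : Continuous ↿G := by fun_prop
  have hG' : Continuous ↿G' := by fun_prop
  have hsplit : expectedSupport F =
      fun y => (∫ t in (0:ℝ)..(y/2), (1 - F t))
        + ((∫ t in (0:ℝ)..y, G y t) - ∫ t in (0:ℝ)..(y/2), G y t) := by
    funext y
    rw [integral_interval_sub_left ((hG.uncurry_left y).intervalIntegrable _ _)
      ((hG.uncurry_left y).intervalIntegrable _ _)]
    rfl
  have h1F : Continuous fun t => 1 - F t := by fun_prop
  have h1 := (h1F.integral_hasStrictDerivAt 0 (x/2)).hasDerivAt.comp x
    ((hasDerivAt_id x).div_const 2)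
  have h2 := hasDerivAt_integral_upper_of_continuous_deriv hG hG' hGG' 0 (hasDerivAt_id x)
  have h3 := hasDerivAt_integral_upper_of_continuous_deriv hG hG' hGG' 0
    ((hasDerivAt_id x).div_const 2)
  have hG'_sub : (∫ t in (0:ℝ)..x, G' x t) - ∫ t in (0:ℝ)..(x/2), G' x t
      = ∫ u in (0:ℝ)..(x/2), f u * (1 - F (x - u)) := by
    rw [integral_interval_sub_left ((hG'.uncurry_left x).intervalIntegrable _ _)
      ((hG'.uncurry_left x).intervalIntegrable _ _), integral_upper_half_eq_comp_sub]
    simp only [G', sub_sub_cancel, mul_comm]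
  rw [hsplit]
  refine (h1.add (h2.sub h3)).congr_deriv ?_
  simp only [expectedSupportDeriv, G, id, sub_self, hF0, show x - x/2 = x/2 by ring] at hG'_sub ⊢
  linear_combination hG'_sub

theorem hasDerivAt_expectedSupportDeriv (x : ℝ) :
    HasDerivAt (expectedSupportDeriv f F) (-∫ u in (0:ℝ)..(x/2), f u * f (x - u)) x := by
  have hFc : Continuous F := continuous_iff_continuousAt.2 fun y => (hF y).continuousAt
  set G : ℝ → ℝ → ℝ := fun y u => f u * (1 - F (y - u))
  set G' : ℝ → ℝ → ℝ := fun y u => -(f u * f (y - u))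
  have hGG' : ∀ y u, HasDerivAt (G · u) (G' y u) y := fun y u => by
    simpa using (((hF (y - u)).comp y ((hasDerivAt_id y).sub_const u)).const_sub 1).const_mul (f u)
  have hG : Continuous ↿G := by fun_prop
  have hG' : Continuous ↿G' := by fun_prop
  have h1 := ((((hF (x/2)).comp x ((hasDerivAt_id x).div_const 2)).const_sub 1).pow 2).div_const 2
  have h2 := hasDerivAt_integral_upper_of_continuous_deriv hG hG' hGG' 0
    ((hasDerivAt_id x).div_const 2)
  refine (h1.add h2).congr_deriv ?_
  simp only [G, G', intervalIntegral.integral_neg, id, Function.comp_apply,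
    show x - x/2 = x/2 by ring]
  ring

theorem hasDerivAt_deriv_expectedSupport (hF0 : F 0 = 0) (x : ℝ) :
    HasDerivAt (deriv (expectedSupport F)) (-∫ u in (0:ℝ)..(x/2), f u * f (x - u)) x := by
  rw [show deriv (expectedSupport F) = expectedSupportDeriv f F from
    funext fun y => (hasDerivAt_expectedSupport hf hF hF0 y).deriv]
  exact hasDerivAt_expectedSupportDeriv hf hF x

end

/-- In the asymmetric game with continuously differentiable, positive
density f on [0,1] and CDF F, the function
M(x) = ∫₀^{x/2}(1-F) + ∫_{x/2}^x (1-F(t))F(x-t)dt is twice differentiable with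
M''(x) = -∫_{x/2}^x f(t)f(x-t)dt < 0 on (0,1), hence strictly concave. -/
theorem stmt15 (f F : ℝ → ℝ)
    (hf : ContDiffOn ℝ 1 f (Set.Icc 0 1))
    (hfpos : ∀ x ∈ Set.Icc (0:ℝ) 1, 0 < f x)
    (hF : ∀ x, F x = ∫ t in (0:ℝ)..x, f t)
    (M : ℝ → ℝ)
    (hM : ∀ x, M x = (∫ t in (0:ℝ)..(x/2), (1 - F t))
                      + ∫ t in (x/2)..x, (1 - F t) * F (x - t)) :
    (∀ x ∈ Set.Ioo (0:ℝ) 1,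
      HasDerivAt (deriv M) (-(∫ t in (x/2)..x, f t * f (x - t))) x ∧
      -(∫ t in (x/2)..x, f t * f (x - t)) < 0) ∧
    StrictConcaveOn ℝ (Set.Icc 0 1) M := by
  obtain rfl : F = fun y => ∫ t in (0:ℝ)..y, f t := funext hF
  obtain rfl : M = expectedSupport _ := funext hM
  obtain ⟨g, hg, hgf, hgpos⟩ :=
    hf.continuousOn.exists_continuous_pos_extension_Icc zero_le_one hfpos
  have hG : ∀ y, HasDerivAt (fun y => ∫ t in (0:ℝ)..y, g t) (g y) y :=
    fun y => (hg.integral_hasStrictDerivAt 0 y).hasDerivAt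
  have hfg : ∀ x ∈ Icc (0:ℝ) 1, EqOn f g (Icc 0 x) :=
    fun x hx => hgf.symm.mono (Icc_subset_Icc_right hx.2)
  have hMG : EqOn (expectedSupport _) (expectedSupport fun y => ∫ t in (0:ℝ)..y, g t) (Icc 0 1) :=
    fun x hx => expectedSupport_primitive_congr hx.1 (hfg x hx)
  have hconv : ∀ x ∈ Ioo (0:ℝ) 1,
      ∫ t in (x/2)..x, f t * f (x - t) = ∫ u in (0:ℝ)..(x/2), g u * g (x - u) := fun x hx => by
    rw [integral_upper_half_mul_comp_sub,
      integral_mul_comp_sub_congr hx.1.le (hfg x (Ioo_subset_Icc_self hx))]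
  have hM'' : ∀ x ∈ Ioo (0:ℝ) 1,
      HasDerivAt (deriv _) (-(∫ t in (x/2)..x, f t * f (x - t))) x := fun x hx => by
    rw [hconv x hx]
    exact (hasDerivAt_deriv_expectedSupport hg hG integral_same x).congr_of_eventuallyEq
      (eventuallyEq_of_mem (isOpen_Ioo.mem_nhds hx) (hMG.mono Ioo_subset_Icc_self)).deriv
  have hneg : ∀ x ∈ Ioo (0:ℝ) 1, -(∫ t in (x/2)..x, f t * f (x - t)) < 0 := fun x hx => by
    rw [hconv x hx, neg_lt_zero]
    exact integral_mul_comp_sub_pos hg hgpos hx.1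
  have hMc : Continuous (expectedSupport fun y => ∫ t in (0:ℝ)..y, g t) :=
    continuous_iff_continuousAt.2 fun x =>
      (hasDerivAt_expectedSupport hg hG integral_same x).continuousAt
  refine ⟨fun x hx => ⟨hM'' x hx, hneg x hx⟩,
    strictConcaveOn_of_deriv2_neg (convex_Icc 0 1) (hMc.continuousOn.congr hMG) fun x hx => ?_⟩
  rw [interior_Icc] at hx
  rw [Function.iterate_succ_apply, Function.iterate_one, (hM'' x hx).deriv]
  exact hneg x hx
end

section
/- For the asymmetric Hotelling game with exponential rate λ, define H(x) = (1/λ)(1 - e^{-λx}) and M(x) = (1/λ)(1 - e^{-λx}(1 + λx/2)). Suppose x ∈ [ln2/λ, 1] and r ∈ [0,x] satisfies e^{λ(x - 2r)} = (1 + λ(x - r))/2. Then H(r) = M(x - r) + (1/(2λ)) e^{-λ(x - r)}. -/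
/- Since `e^{-λr} = e^{-λ(x-r)} e^{λ(x-2r)}`, the first-order condition eliminates `e^{-λr}`;
both sides then become the same polynomial in `1/λ`, `e^{-λ(x-r)}` and `λ(x-r)`. -/

lemma exp_neg_mul_eq_of_exp_mul_sub_two_mul {lam x r : ℝ}
    (heq : Real.exp (lam * (x - 2 * r)) = (1 + lam * (x - r)) / 2) :
    Real.exp (-(lam * r)) = Real.exp (-(lam * (x - r))) * ((1 + lam * (x - r)) / 2) := by
  rw [← heq, ← Real.exp_add]
  ring_nf

theorem stmt17_general (lam : ℝ)
    (H M : ℝ → ℝ)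
    (hH : ∀ x, H x = (1/lam) * (1 - Real.exp (-(lam * x))))
    (hM : ∀ x, M x = (1/lam) * (1 - Real.exp (-(lam * x)) * (1 + lam * x / 2)))
    (x r : ℝ)
    (heq : Real.exp (lam * (x - 2*r)) = (1 + lam * (x - r)) / 2) :
    H r = M (x - r) + (1/(2*lam)) * Real.exp (-(lam * (x - r))) := by
  rw [hH, hM, exp_neg_mul_eq_of_exp_mul_sub_two_mul heq]
  ring

/-- For the asymmetric exponential game with rate λ, with
H(x) = (1/λ)(1 - e^{-λx}) and M(x) = (1/λ)(1 - e^{-λx}(1 + λx/2)):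
if x ∈ [ln2/λ, 1] and r ∈ [0,x] satisfies e^{λ(x-2r)} = (1 + λ(x-r))/2, then
H(r) = M(x-r) + (1/(2λ))e^{-λ(x-r)}. -/
theorem stmt17 (lam : ℝ) (hlam : 0 < lam)
    (H M : ℝ → ℝ)
    (hH : ∀ x, H x = (1/lam) * (1 - Real.exp (-(lam * x))))
    (hM : ∀ x, M x = (1/lam) * (1 - Real.exp (-(lam * x)) * (1 + lam * x / 2)))
    (x r : ℝ) (hx : x ∈ Set.Icc (Real.log 2 / lam) 1)
    (hr : r ∈ Set.Icc (0:ℝ) x)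
    (heq : Real.exp (lam * (x - 2*r)) = (1 + lam * (x - r)) / 2) :
    H r = M (x - r) + (1/(2*lam)) * Real.exp (-(lam * (x - r))) :=
  stmt17_general lam H M hH hM x r heq
end

section
/- Suppose α₀ ∈ (0,1) and β₀ > 0 satisfy e^{-α₀}(1+α₀) = e^{-2β₀}(1+β₀). Then 2β₀ ≤ α₀, and consequently e^{β₀} < 4(1 + 1/α₀). -/
lemma aux_anti (x y : ℝ) (hx : 0 ≤ x) (hxy : x < y) :
    Real.exp (-y) * (1 + y) < Real.exp (-x) * (1 + x) := by
  have h1 : 1 + y < (1 + x) * Real.exp (y - x) := by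
    have h := Real.add_one_lt_exp (by linarith : y - x ≠ 0)
    nlinarith [Real.exp_pos (y - x)]
  have hxe : Real.exp (-x) = Real.exp (-y) * Real.exp (y - x) := by
    rw [← Real.exp_add]; ring_nf
  rw [hxe]
  nlinarith [Real.exp_pos (-y)]

/-- If α₀ ∈ (0,1) and β₀ > 0 satisfy
e^{-α₀}(1+α₀) = e^{-2β₀}(1+β₀), then 2β₀ ≤ α₀ and e^{β₀} < 4(1 + 1/α₀). -/
theorem stmt19 (α₀ β₀ : ℝ) (hα : α₀ ∈ Set.Ioo (0:ℝ) 1) (hβ : 0 < β₀)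
    (heq : Real.exp (-α₀) * (1 + α₀) = Real.exp (-(2*β₀)) * (1 + β₀)) :
    2*β₀ ≤ α₀ ∧ Real.exp β₀ < 4 * (1 + 1/α₀) := by
  obtain ⟨hα0, hα1⟩ := hα
  have h2b : 2*β₀ ≤ α₀ := by
    by_contra h
    push_neg at h
    have := aux_anti α₀ (2*β₀) hα0.le h
    rw [heq] at this
    nlinarith [Real.exp_pos (-(2*β₀))]
  refine ⟨h2b, ?_⟩
  have hb1 : β₀ < 1 := by linarith
  have he : Real.exp β₀ < Real.exp 1 := Real.exp_lt_exp.mpr hb1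
  have h1a : 1 < 1/α₀ := by rw [lt_div_iff₀ hα0]; linarith
  have := Real.exp_one_lt_d9
  linarith
end
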